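/- arXiv:2208.00373 — 3 statements merged into one kernel-verified Lean document; each statement's English description precedes it below -/
import Mathlib

section
/- Let M be a d-CFF t×n binary matrix, and let D ⊆ {1,...,n} be a set of 'defective' column indices with |D| ≤ d. Define a row i to 'pass' if M_{i,j} = 0 for all j ∈ D, and for each passing row i let V_i = {j : M_{i,j} = 1}. Then the union V of all V_i over passing rows equals exactly {1,...,n} \ D. -/
/-- A set of `l` columns `cols` of the binary matrix `M` contains a permutation
submatrix of dimension `l`: there are `l` distinct rows such that the restriction
of `M` to these rows and columns is a permutation matrix. -/
def IsPermSubmatrix {ι κ : Type*} (M : ι → κ → Bool) (l : ℕ) (cols : Fin l → κ) : Prop :=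
  ∃ rows : Fin l → ι, Function.Injective rows ∧
    ∃ π : Equiv.Perm (Fin l), ∀ a b : Fin l, M (rows a) (cols b) = true ↔ π a = b

/-- `M` is a `d`-cover-free family: any set of `d+1` (distinct) columns contains a
permutation submatrix of dimension `d+1`. -/
def IsCFF {ι κ : Type*} (d : ℕ) (M : ι → κ → Bool) : Prop :=
  ∀ cols : Fin (d + 1) → κ, Function.Injective cols → IsPermSubmatrix M (d + 1) cols

/-!
A row passing a defect set `D` never meets a defective column, so only non-defective columns
are recovered. Conversely, for `j ∉ D` enlarge `D` to `d` columns avoiding `j`; the cover-free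
property gives a permutation submatrix on these `d + 1` columns, and the row of that submatrix
holding the `1` in column `j` is a passing row containing `j`.
-/

variable {ι κ : Type*} {M : ι → κ → Bool}

theorem IsPermSubmatrix.exists_row_eq_true_iff {l : ℕ} {cols : Fin l → κ}
    (hM : IsPermSubmatrix M l cols) (b : Fin l) :
    ∃ i, ∀ b', M i (cols b') = true ↔ b' = b := by
  obtain ⟨rows, -, π, hπ⟩ := hM
  exact ⟨rows (π.symm b), fun b' => by rw [hπ, Equiv.apply_symm_apply, eq_comm]⟩

theorem IsCFF.exists_row_of_card_eq {d : ℕ} (hM : IsCFF d M) {S : Finset κ} (hS : S.card = d)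
    {j : κ} (hj : j ∉ S) : ∃ i, (∀ j' ∈ S, M i j' = false) ∧ M i j = true := by
  let e : Fin d → κ := fun k => (S.equivFin.symm (Fin.cast hS.symm k) : κ)
  have he_range : Set.range e = S := by
    ext x
    refine ⟨fun ⟨k, hk⟩ => hk ▸ (S.equivFin.symm _).2, fun hx => ?_⟩
    exact ⟨Fin.cast hS (S.equivFin ⟨x, hx⟩), by simp [e]⟩
  have he_inj : Function.Injective e := fun a b hab => by
    simpa [e, Subtype.val_inj] using hab
  have hcols : Function.Injective (Fin.cons j e : Fin (d + 1) → κ) :=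
    Fin.cons_injective_iff.2 ⟨by rwa [he_range], he_inj⟩
  obtain ⟨i, hi⟩ := (hM _ hcols).exists_row_eq_true_iff 0
  refine ⟨i, fun j' hj' => ?_, (hi 0).2 rfl⟩
  obtain ⟨k, rfl⟩ : j' ∈ Set.range e := he_range ▸ hj'
  simpa [Fin.succ_ne_zero] using hi k.succ

theorem IsCFF.exists_row_of_card_le [Fintype κ] {d : ℕ} (hM : IsCFF d M)
    (hκ : d + 1 ≤ Fintype.card κ) {D : Finset κ} (hD : D.card ≤ d) {j : κ} (hj : j ∉ D) :
    ∃ i, (∀ j' ∈ D, M i j' = false) ∧ M i j = true := by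
  classical
  have hD_sub : D ⊆ Finset.univ.erase j := fun x hx =>
    Finset.mem_erase.2 ⟨ne_of_mem_of_not_mem hx hj, Finset.mem_univ x⟩
  obtain ⟨S, hDS, hS_sub, hS⟩ := Finset.exists_subsuperset_card_eq hD_sub hD
    (by rw [Finset.card_erase_of_mem (Finset.mem_univ j), Finset.card_univ]; omega)
  obtain ⟨i, hiS, hij⟩ := hM.exists_row_of_card_eq hS fun h => (Finset.mem_erase.1 (hS_sub h)).1 rfl
  exact ⟨i, fun j' hj' => hiS j' (hDS hj'), hij⟩

theorem stmt_3 (d t n : ℕ) (hn : d + 1 ≤ n) (M : Fin t → Fin n → Bool)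
    (h : IsCFF d M) (D : Finset (Fin n)) (hD : D.card ≤ d) :
    ∀ j : Fin n, (∃ i : Fin t, (∀ j' ∈ D, M i j' = false) ∧ M i j = true) ↔ j ∉ D := by
  intro j
  refine ⟨fun ⟨i, hpass, hij⟩ hjD => ?_, h.exists_row_of_card_le (by simpa using hn) hD⟩
  simp [hpass j hjD] at hij
end

section
/- Let C be a code of length l over an alphabet of size q with n-ary message length (i.e., |C| = q^n codewords) and minimum Hamming distance D, and suppose l - D ≥ 1. Construct the binary matrix M with lq rows indexed by pairs (position p, symbol a) and q^n columns indexed by codewords c, where M_{(p,a),c} = 1 iff c_p = a. Then M is a d-CFF with d = floor((l-1)/(l-D)). -/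
theorem stmt_7 (l q D n N : ℕ) (hq : 0 < q) (hlD : D < l) (hN : N = q ^ n)
    (C : Fin N → Fin l → Fin q) (hinj : Function.Injective C)
    (hdist : ∀ c c' : Fin N, c ≠ c' → D ≤ hammingDist (C c) (C c')) :
    IsCFF ((l - 1) / (l - D))
      (fun (pa : Fin l × Fin q) (c : Fin N) => decide (C c pa.1 = pa.2)) := by
  intro cols hcols
  have hd : (l - 1) / (l - D) * (l - D) ≤ l - 1 := Nat.div_mul_le_self _ _
  have hl : 0 < l := lt_of_le_of_lt (Nat.zero_le D) hlD
  have key : ∀ i : Fin ((l - 1) / (l - D) + 1), ∃ p : Fin l,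
      ∀ j, j ≠ i → C (cols i) p ≠ C (cols j) p := by
    intro i
    by_contra h
    push_neg at h
    have hsub : (Finset.univ : Finset (Fin l)) ⊆
        (Finset.univ.erase i).biUnion
          (fun j => Finset.univ.filter (fun p => C (cols i) p = C (cols j) p)) := by
      intro p _
      obtain ⟨j, hji, hpj⟩ := h p
      exact Finset.mem_biUnion.mpr ⟨j, Finset.mem_erase.mpr ⟨hji, Finset.mem_univ _⟩,
        Finset.mem_filter.mpr ⟨Finset.mem_univ _, hpj⟩⟩
    have hfilt : ∀ j : Fin ((l - 1) / (l - D) + 1), j ≠ i →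
        (Finset.univ.filter (fun p => C (cols i) p = C (cols j) p)).card ≤ l - D := by
      intro j hji
      have hne : cols i ≠ cols j := fun hc => hji (hcols hc).symm
      have hD : D ≤ hammingDist (C (cols i)) (C (cols j)) := hdist _ _ hne
      have heq : Finset.univ.filter (fun p => C (cols i) p = C (cols j) p) =
          (Finset.univ.filter (fun p => C (cols i) p ≠ C (cols j) p))ᶜ := by
        ext p; simp
      rw [heq, Finset.card_compl]
      have : hammingDist (C (cols i)) (C (cols j)) =
          (Finset.univ.filter (fun p => C (cols i) p ≠ C (cols j) p)).card := rfl
      simp only [Fintype.card_fin]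
      omega
    have hcard : l ≤ (l - 1) / (l - D) * (l - D) := by
      calc l = (Finset.univ : Finset (Fin l)).card := by simp
        _ ≤ ((Finset.univ.erase i).biUnion
              (fun j => Finset.univ.filter (fun p => C (cols i) p = C (cols j) p))).card :=
            Finset.card_le_card hsub
        _ ≤ ∑ j ∈ Finset.univ.erase i,
              (Finset.univ.filter (fun p => C (cols i) p = C (cols j) p)).card :=
            Finset.card_biUnion_le
        _ ≤ ∑ j ∈ Finset.univ.erase i, (l - D) := by
            apply Finset.sum_le_sum
            intro j hj
            exact hfilt j (Finset.mem_erase.mp hj).1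
        _ = (l - 1) / (l - D) * (l - D) := by
            rw [Finset.sum_const, smul_eq_mul]
            simp [Finset.card_erase_of_mem]
    omega
  choose p hp using key
  refine ⟨fun i => (p i, C (cols i) (p i)), ?_, Equiv.refl _, ?_⟩
  · intro a b hab
    by_contra hne
    have h1 : p a = p b := congrArg Prod.fst hab
    have h2 : C (cols a) (p a) = C (cols b) (p a) := by
      have := congrArg Prod.snd hab
      simpa [h1] using this
    exact hp a b (fun h => hne h.symm) h2
  · intro a b
    simp only [decide_eq_true_eq, Equiv.refl_apply]
    constructor
    · intro h
      by_contra hne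
      exact hp a b (fun h' => hne h'.symm) h.symm
    · rintro rfl; rfl
end

section
/- Correctness of MTSS verification (Theorem 3 of the paper, combinatorial core): Let M be a d-CFF t×n binary matrix, let m, m' be sequences of n blocks with I = diff(m,m') = {j : m[j] ≠ m'[j]} of size at most d. Assume the per-row test function h satisfies: test i on m equals test i on m' if and only if all blocks j with M_{i,j} = 1 agree between m and m' (no hash collisions). Then the set V = union over {i : test_i(m) = test_i(m')} of {j : M_{i,j}=1} equals {1,...,n} \ I, so the verification algorithm outputs exactly I as the set of modified blocks. -/
theorem stmt_11 {B : Type*} [DecidableEq B] (d t n : ℕ) (hn : d + 1 ≤ n)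
    (M : Fin t → Fin n → Bool) (h : IsCFF d M) (m m' : Fin n → B)
    (hI : (Finset.univ.filter fun j => m j ≠ m' j).card ≤ d)
    (rowMatch : Fin t → Prop)
    (hmatch : ∀ i, rowMatch i ↔ ∀ j, M i j = true → m j = m' j) :
    ∀ j : Fin n, (∃ i, rowMatch i ∧ M i j = true) ↔ m j = m' j := by
  intro j
  constructor
  · rintro ⟨i, hi, hij⟩
    exact (hmatch i).1 hi j hij
  · intro hj
    set I : Finset (Fin n) := Finset.univ.filter fun j => m j ≠ m' j with hIdef
    have hS : (insert j I).card ≤ d + 1 := le_trans (Finset.card_insert_le _ _)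
      (Nat.add_le_add_right hI 1)
    obtain ⟨T, hST, hTcard⟩ := Finset.exists_superset_card_eq hS
      (by simpa [Finset.card_univ] using hn)
    let cols : Fin (d + 1) → Fin n := fun b => (T.orderIsoOfFin hTcard b : Fin n)
    have hcols : Function.Injective cols := fun a b hab => by
      apply (T.orderIsoOfFin hTcard).injective
      exact Subtype.ext hab
    obtain ⟨rows, hrows, π, hperm⟩ := h cols hcols
    have hjT : j ∈ T := hST (Finset.mem_insert_self _ _)
    obtain ⟨b₀, hb₀⟩ : ∃ b₀, cols b₀ = j := by
      obtain ⟨b₀, hb₀⟩ := (T.orderIsoOfFin hTcard).surjective ⟨j, hjT⟩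
      exact ⟨b₀, congrArg Subtype.val hb₀⟩
    refine ⟨rows (π.symm b₀), ?_, ?_⟩
    · rw [hmatch]
      intro k hk
      by_cases hkT : k ∈ T
      · obtain ⟨b, hb⟩ := (T.orderIsoOfFin hTcard).surjective ⟨k, hkT⟩
        have hb' : cols b = k := congrArg Subtype.val hb
        rw [← hb'] at hk
        have : π (π.symm b₀) = b := (hperm _ _).1 hk
        rw [Equiv.apply_symm_apply] at this
        rw [← hb', ← this, hb₀]
        exact hj
      · have : k ∉ I := fun hkI => hkT (hST (Finset.mem_insert_of_mem hkI))
        simpa [hIdef] using this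
    · rw [← hb₀]
      exact (hperm _ _).2 (Equiv.apply_symm_apply _ _)
end
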